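/- Define ζ : (−1, ∞) → ℝ by ζ(t) = ((3/4)·(t·√(t²−1) − log(t + √(t²−1))))^{2/3} for t ≥ 1 and ζ(t) = −((3/4)·(arccos t − t·√(1−t²)))^{2/3} for −1 < t < 1. Then ζ is continuous and strictly increasing on (−1, ∞), ζ(1) = 0, and ζ maps the interval (−1, ∞) bijectively onto the interval (−(3π/4)^{2/3}, ∞). -/

import Mathlib

/-- The Liouville variable of the turning point analysis for Hermite polynomials:
`ζ(t) = ((3/4)(t√(t²−1) − log(t+√(t²−1))))^{2/3}` for `t ≥ 1` and
`ζ(t) = −((3/4)(arccos t − t√(1−t²)))^{2/3}` for `t < 1`. -/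
noncomputable def zetaHer (t : ℝ) : ℝ :=
  if 1 ≤ t then
    ((3 / 4) * (t * Real.sqrt (t ^ 2 - 1) - Real.log (t + Real.sqrt (t ^ 2 - 1)))) ^ ((2 : ℝ) / 3)
  else
    -(((3 / 4) * (Real.arccos t - t * Real.sqrt (1 - t ^ 2))) ^ ((2 : ℝ) / 3))


section aux
open Real Set

noncomputable def fH (t : ℝ) : ℝ :=
  t * Real.sqrt (t ^ 2 - 1) - Real.log (t + Real.sqrt (t ^ 2 - 1))

noncomputable def gH (t : ℝ) : ℝ := Real.arccos t - t * Real.sqrt (1 - t ^ 2)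

lemma sqrtD1 {t : ℝ} (ht : 1 < t) :
    HasDerivAt (fun t : ℝ => Real.sqrt (t ^ 2 - 1)) (t / Real.sqrt (t ^ 2 - 1)) t := by
  have h : (0:ℝ) < t ^ 2 - 1 := by nlinarith
  have h1 : HasDerivAt (fun t : ℝ => t ^ 2 - 1) (2 * t) t := by
    simpa using (hasDerivAt_pow 2 t).sub_const 1
  have := (Real.hasDerivAt_sqrt h.ne').comp t h1
  refine this.congr_deriv (Eq.symm ?_)
  have hs0 : Real.sqrt (t ^ 2 - 1) ≠ 0 := (Real.sqrt_pos.mpr h).ne'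
  field_simp

lemma fHD {t : ℝ} (ht : 1 < t) : HasDerivAt fH (2 * Real.sqrt (t ^ 2 - 1)) t := by
  have h : (0:ℝ) < t ^ 2 - 1 := by nlinarith
  have hs : 0 < Real.sqrt (t ^ 2 - 1) := Real.sqrt_pos.mpr h
  have hsq : Real.sqrt (t ^ 2 - 1) ^ 2 = t ^ 2 - 1 := Real.sq_sqrt h.le
  have hD := sqrtD1 ht
  have h1 : HasDerivAt (fun t : ℝ => t * Real.sqrt (t ^ 2 - 1))
      (1 * Real.sqrt (t ^ 2 - 1) + t * (t / Real.sqrt (t ^ 2 - 1))) t :=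
    (hasDerivAt_id t).mul hD
  have hpos : 0 < t + Real.sqrt (t ^ 2 - 1) := by linarith [hs]
  have h2 : HasDerivAt (fun t : ℝ => Real.log (t + Real.sqrt (t ^ 2 - 1)))
      ((t + Real.sqrt (t ^ 2 - 1))⁻¹ * (1 + t / Real.sqrt (t ^ 2 - 1))) t :=
    by have := (Real.hasDerivAt_log hpos.ne').comp t ((hasDerivAt_id' t).add hD); exact this
  have := h1.sub h2
  refine this.congr_deriv (Eq.symm ?_)
  have hs0 : Real.sqrt (t ^ 2 - 1) ≠ 0 := hs.ne'
  field_simp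
  linear_combination (Real.sqrt (t ^ 2 - 1) + t) * hsq

lemma sqrtD2 {t : ℝ} (h1 : -1 < t) (h2 : t < 1) :
    HasDerivAt (fun t : ℝ => Real.sqrt (1 - t ^ 2)) (-t / Real.sqrt (1 - t ^ 2)) t := by
  have h : (0:ℝ) < 1 - t ^ 2 := by nlinarith
  have hd : HasDerivAt (fun t : ℝ => 1 - t ^ 2) (-(2 * t)) t := by
    simpa using (hasDerivAt_pow 2 t).const_sub 1
  have := (Real.hasDerivAt_sqrt h.ne').comp t hd
  refine this.congr_deriv (Eq.symm ?_)
  have hs0 : Real.sqrt (1 - t ^ 2) ≠ 0 := (Real.sqrt_pos.mpr h).ne'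
  field_simp

lemma gHD {t : ℝ} (h1 : -1 < t) (h2 : t < 1) :
    HasDerivAt gH (-(2 * Real.sqrt (1 - t ^ 2))) t := by
  have h : (0:ℝ) < 1 - t ^ 2 := by nlinarith
  have hs : 0 < Real.sqrt (1 - t ^ 2) := Real.sqrt_pos.mpr h
  have hsq : Real.sqrt (1 - t ^ 2) ^ 2 = 1 - t ^ 2 := Real.sq_sqrt h.le
  have hA := Real.hasDerivAt_arccos (ne_of_gt h1) (ne_of_lt h2)
  have hB : HasDerivAt (fun t : ℝ => t * Real.sqrt (1 - t ^ 2))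
      (1 * Real.sqrt (1 - t ^ 2) + t * (-t / Real.sqrt (1 - t ^ 2))) t :=
    (hasDerivAt_id t).mul (sqrtD2 h1 h2)
  have := hA.sub hB
  refine this.congr_deriv (Eq.symm ?_)
  have hs0 : Real.sqrt (1 - t ^ 2) ≠ 0 := hs.ne'
  field_simp
  linear_combination (-1 : ℝ) * hsq

lemma fH_one : fH 1 = 0 := by norm_num [fH]

lemma gH_one : gH 1 = 0 := by norm_num [gH, Real.arccos_one]

lemma gH_negone : gH (-1) = Real.pi := by norm_num [gH, Real.arccos_neg_one]

lemma fH_cont : ContinuousOn fH (Set.Ici (1:ℝ)) := by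
  have hc : Continuous fun t : ℝ => t + Real.sqrt (t ^ 2 - 1) := by continuity
  apply ContinuousOn.sub
  · exact (continuous_id.mul (Real.continuous_sqrt.comp (by continuity))).continuousOn
  · refine Real.continuousOn_log.comp hc.continuousOn ?_
    intro t ht
    have h0 : 0 ≤ Real.sqrt (t ^ 2 - 1) := Real.sqrt_nonneg _
    have : (0:ℝ) < t + Real.sqrt (t ^ 2 - 1) := by
      have : (1:ℝ) ≤ t := ht
      linarith
    simpa using this.ne'

lemma gH_cont : Continuous gH :=
  Real.continuous_arccos.sub (continuous_id.mul (Real.continuous_sqrt.comp (by continuity)))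

lemma fH_mono : StrictMonoOn fH (Set.Ici (1:ℝ)) := by
  apply strictMonoOn_of_deriv_pos (convex_Ici 1) fH_cont
  intro x hx
  rw [interior_Ici] at hx
  rw [(fHD hx).deriv]
  have : (0:ℝ) < x ^ 2 - 1 := by nlinarith [Set.mem_Ioi.mp hx]
  have := Real.sqrt_pos.mpr this
  linarith

lemma gH_anti : StrictAntiOn gH (Set.Icc (-1:ℝ) 1) := by
  apply strictAntiOn_of_deriv_neg (convex_Icc _ _) gH_cont.continuousOn
  intro x hx
  rw [interior_Icc] at hx
  rw [(gHD hx.1 hx.2).deriv]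
  have : (0:ℝ) < 1 - x ^ 2 := by nlinarith [hx.1, hx.2]
  have := Real.sqrt_pos.mpr this
  linarith

lemma fH_nonneg {t : ℝ} (ht : 1 ≤ t) : 0 ≤ fH t := by
  rcases eq_or_lt_of_le ht with h | h
  · rw [← h, fH_one]
  · have := fH_mono (Set.self_mem_Ici) (Set.mem_Ici.mpr ht) h
    rw [fH_one] at this
    exact this.le
  
lemma gH_nonneg {t : ℝ} (h1 : -1 ≤ t) (h2 : t ≤ 1) : 0 ≤ gH t := by
  rcases eq_or_lt_of_le h2 with h | h
  · rw [h, gH_one]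
  · have := gH_anti ⟨h1, h2⟩ ⟨by norm_num, le_refl 1⟩ h
    rw [gH_one] at this
    exact this.le

lemma zeta_eq_pos {t : ℝ} (ht : 1 ≤ t) :
    zetaHer t = ((3 / 4) * fH t) ^ ((2 : ℝ) / 3) := by
  rw [zetaHer, if_pos ht, fH]

lemma zeta_one : zetaHer 1 = 0 := by
  rw [zeta_eq_pos le_rfl, fH_one, mul_zero, Real.zero_rpow (by norm_num)]

lemma zeta_eq_neg {t : ℝ} (ht : t ≤ 1) :
    zetaHer t = -(((3 / 4) * gH t) ^ ((2 : ℝ) / 3)) := by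
  rcases eq_or_lt_of_le ht with h | h
  · rw [h, zeta_one, gH_one, mul_zero, Real.zero_rpow (by norm_num), neg_zero]
  · rw [zetaHer, if_neg (by linarith), gH]

lemma zeta_negone : zetaHer (-1) = -((3 * Real.pi / 4) ^ ((2 : ℝ) / 3)) := by
  rw [zeta_eq_neg (by norm_num), gH_negone]
  norm_num
  ring_nf

lemma zeta_cont : ContinuousOn zetaHer (Set.Ici (-1:ℝ)) := by
  have hrp : Continuous fun x : ℝ => x ^ ((2 : ℝ) / 3) := by
    rw [continuous_iff_continuousAt]
    intro x
    exact Real.continuousAt_rpow_const x _ (Or.inr (by norm_num))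
  have key : ContinuousOn
      (fun t : ℝ => if 1 ≤ t then ((3 / 4) * fH t) ^ ((2 : ℝ) / 3)
        else -(((3 / 4) * gH t) ^ ((2 : ℝ) / 3))) (Set.Ici (-1:ℝ)) := by
    apply ContinuousOn.if
    · intro a ha
      have hfr : frontier {a : ℝ | 1 ≤ a} = {1} := by
        rw [show {a : ℝ | 1 ≤ a} = Set.Ici 1 from rfl, frontier_Ici]
      rw [hfr] at ha
      have : a = 1 := ha.2
      subst this
      rw [fH_one, gH_one]
      norm_num [Real.zero_rpow]
    · have hsub : Set.Ici (-1:ℝ) ∩ closure {a : ℝ | 1 ≤ a} ⊆ Set.Ici 1 := by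
        intro x hx
        have := hx.2
        rwa [show {a : ℝ | 1 ≤ a} = Set.Ici 1 from rfl, closure_Ici] at this
      exact (hrp.comp_continuousOn (continuousOn_const.mul fH_cont)).mono hsub
    · exact ((hrp.comp (continuous_const.mul gH_cont)).neg).continuousOn
  apply key.congr
  intro t ht
  show zetaHer t = if 1 ≤ t then ((3 / 4) * fH t) ^ ((2 : ℝ) / 3)
    else -(((3 / 4) * gH t) ^ ((2 : ℝ) / 3))
  by_cases h : 1 ≤ t
  · rw [if_pos h, zeta_eq_pos h]
  · rw [if_neg h, zeta_eq_neg (le_of_not_ge h)]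

lemma zeta_mono : StrictMonoOn zetaHer (Set.Ici (-1:ℝ)) := by
  have h1 : ∀ x ∈ Set.Icc (-1:ℝ) 1, ∀ y ∈ Set.Icc (-1:ℝ) 1, x < y →
      zetaHer x < zetaHer y := by
    intro x hx y hy hxy
    rw [zeta_eq_neg hx.2, zeta_eq_neg hy.2]
    have hgy : 0 ≤ gH y := gH_nonneg hy.1 hy.2
    have hg : gH y < gH x := gH_anti hx hy hxy
    have := Real.rpow_lt_rpow (by linarith : (0:ℝ) ≤ (3/4) * gH y)
      (by linarith : (3/4) * gH y < (3/4) * gH x) (by norm_num : (0:ℝ) < 2/3)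
    linarith
  have h2 : ∀ x ∈ Set.Ici (1:ℝ), ∀ y ∈ Set.Ici (1:ℝ), x < y →
      zetaHer x < zetaHer y := by
    intro x hx y hy hxy
    rw [zeta_eq_pos hx, zeta_eq_pos hy]
    have hfx : 0 ≤ fH x := fH_nonneg hx
    have hf : fH x < fH y := fH_mono hx hy hxy
    exact Real.rpow_lt_rpow (by linarith) (by linarith) (by norm_num)
  intro x hx y hy hxy
  rcases le_or_gt y 1 with h | h
  · exact h1 x ⟨hx, by linarith⟩ y ⟨hy, h⟩ hxy
  rcases le_or_gt 1 x with h' | h'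
  · exact h2 x h' y h.le hxy
  · calc zetaHer x < zetaHer 1 := h1 x ⟨hx, h'.le⟩ 1 ⟨by norm_num, le_refl 1⟩ h'
      _ < zetaHer y := h2 1 Set.self_mem_Ici y h.le h

lemma zeta_large (c : ℝ) : ∃ b : ℝ, 1 ≤ b ∧ c < zetaHer b := by
  obtain ⟨M, hMdef⟩ : ∃ M : ℝ, M = |c| + 1 := ⟨_, rfl⟩
  have hM : 0 < M := by rw [hMdef]; positivity
  obtain ⟨b, hbdef⟩ : ∃ b : ℝ, b = 6 + (4 / 3) * M ^ ((3:ℝ)/2) := ⟨_, rfl⟩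
  have hMr : 0 ≤ M ^ ((3:ℝ)/2) := Real.rpow_nonneg hM.le _
  have hb6 : (6:ℝ) ≤ b := by rw [hbdef]; linarith
  have hb1 : (1:ℝ) ≤ b := by linarith
  refine ⟨b, hb1, ?_⟩
  have hsn : 0 ≤ Real.sqrt (b ^ 2 - 1) := Real.sqrt_nonneg _
  have hs : b / 2 ≤ Real.sqrt (b ^ 2 - 1) := by
    rw [show b / 2 = Real.sqrt ((b / 2) ^ 2) from (Real.sqrt_sq (by linarith)).symm]
    apply Real.sqrt_le_sqrt
    nlinarith
  have hs2 : Real.sqrt (b ^ 2 - 1) ≤ b := by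
    calc Real.sqrt (b ^ 2 - 1) ≤ Real.sqrt (b ^ 2) := Real.sqrt_le_sqrt (by linarith)
      _ = b := Real.sqrt_sq (by linarith)
  have hlog : Real.log (b + Real.sqrt (b ^ 2 - 1)) ≤ 2 * b := by
    have hp : (0:ℝ) < b + Real.sqrt (b ^ 2 - 1) := by linarith
    have := Real.log_le_sub_one_of_pos hp
    linarith
  have hfb : b ≤ fH b := by
    have h1 : b ^ 2 / 2 ≤ b * Real.sqrt (b ^ 2 - 1) := by nlinarith
    have : b ^ 2 / 2 - 2 * b ≥ b := by nlinarith
    unfold fH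
    linarith
  have hMeq : (M ^ ((3:ℝ)/2)) ^ ((2:ℝ)/3) = M := by
    rw [← Real.rpow_mul hM.le]
    norm_num
  have h34 : M ^ ((3:ℝ)/2) ≤ (3/4) * fH b := by
    have : (4/3) * M ^ ((3:ℝ)/2) ≤ b := by linarith
    linarith
  rw [zeta_eq_pos hb1]
  calc c < M := by rw [hMdef]; linarith [le_abs_self c]
    _ = (M ^ ((3:ℝ)/2)) ^ ((2:ℝ)/3) := hMeq.symm
    _ ≤ ((3/4) * fH b) ^ ((2:ℝ)/3) :=
        Real.rpow_le_rpow hMr h34 (by norm_num)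

end aux

/-- `ζ` is continuous and strictly increasing on `(−1, ∞)`, vanishes at the turning point
`t = 1`, and maps `(−1, ∞)` bijectively onto `(−(3π/4)^{2/3}, ∞)`. -/
theorem stmt13 :
    ContinuousOn zetaHer (Set.Ioi (-1)) ∧
    StrictMonoOn zetaHer (Set.Ioi (-1)) ∧
    zetaHer 1 = 0 ∧
    Set.BijOn zetaHer (Set.Ioi (-1))
      (Set.Ioi (-((3 * Real.pi / 4) ^ ((2 : ℝ) / 3)))) := by
  have hsub : Set.Ioi (-1:ℝ) ⊆ Set.Ici (-1:ℝ) := Set.Ioi_subset_Ici_self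
  refine ⟨zeta_cont.mono hsub, zeta_mono.mono hsub, zeta_one, ?_, ?_, ?_⟩
  · -- MapsTo
    intro t ht
    have : zetaHer (-1) < zetaHer t :=
      zeta_mono Set.self_mem_Ici (hsub ht) ht
    rwa [zeta_negone] at this
  · exact (zeta_mono.injOn).mono hsub
  · -- SurjOn
    intro c hc
    have hc' : -((3 * Real.pi / 4) ^ ((2 : ℝ) / 3)) < c := hc
    obtain ⟨b, hb1, hcb⟩ := zeta_large c
    have hab : (-1:ℝ) ≤ b := by linarith
    have hcont : ContinuousOn zetaHer (Set.Icc (-1) b) :=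
      zeta_cont.mono (Set.Icc_subset_Ici_self)
    have hmem : c ∈ Set.Icc (zetaHer (-1)) (zetaHer b) := by
      rw [zeta_negone]
      exact ⟨hc'.le, hcb.le⟩
    obtain ⟨x, hx, hxc⟩ := intermediate_value_Icc hab hcont hmem
    refine ⟨x, ?_, hxc⟩
    rcases eq_or_lt_of_le hx.1 with h | h
    · exfalso
      rw [← h, zeta_negone] at hxc
      rw [← hxc] at hc'
      exact lt_irrefl _ hc'
    · exact h
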